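/- For all real x > 0, y > 0, z > 1, the function ρ(x,y,z) = x^z ∫_0^{z-1} ( y(z-1)²/(2x) )^t / Γ(t+1) dt is partially differentiable in x and in y, and satisfies the Euler relation x·(∂ρ/∂x)(x,y,z) + y·(∂ρ/∂y)(x,y,z) = z·ρ(x,y,z). -/

import Mathlib

/-!
Put `k = (z-1)²/2` and `f = E(·, z-1)`, so that `ρ(u,v) = u^z f(vk/u)`. Differentiating,
`x ∂ρ/∂x = z ρ - x^z f'(a) a` and `y ∂ρ/∂y = x^z f'(a) a` with `a = yk/x`, which gives the
Euler relation. The only analytic input is that `f` is differentiable at `a > 0`: substituting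
`b = eˢ` turns `f(b) = ∫₀^{z-1} bᵗ/Γ(t+1) dt` into `∫ eˢᵗ g(t) dt` with `g = 1/Γ(·+1)` continuous,
which can be differentiated under the integral sign.
-/

noncomputable def Efun (x z : ℝ) : ℝ :=
  ∫ t in (0 : ℝ)..z, x ^ t / Real.Gamma (t + 1)

/-- The second continuous analogue of the Pochhammer symbol. -/
noncomputable def rho (x y z : ℝ) : ℝ :=
  x ^ z * Efun (y * (z - 1) ^ 2 / (2 * x)) (z - 1)

open Real MeasureTheory Set Filter Interval

/- Mathlib's junk value `Γ(-n) = 0` is the true value of `1/Γ` there, so `1/Γ` is continuous on ℝ. -/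
theorem Real.continuous_inv_Gamma : Continuous fun t : ℝ => (Gamma t)⁻¹ := by
  have h : (fun t : ℝ => (Gamma t)⁻¹) = fun t : ℝ => ((Complex.Gamma t)⁻¹).re := by
    ext t
    rw [Complex.Gamma_ofReal, ← Complex.ofReal_inv, Complex.ofReal_re]
  rw [h]
  exact Complex.continuous_re.comp
    (Complex.differentiable_one_div_Gamma.continuous.comp Complex.continuous_ofReal)

theorem hasDerivAt_intervalIntegral_exp_mul {g : ℝ → ℝ} {a b : ℝ}
    (hg : IntervalIntegrable g volume a b) (s₀ : ℝ) :
    HasDerivAt (fun s => ∫ t in a..b, exp (s * t) * g t)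
      (∫ t in a..b, t * exp (s₀ * t) * g t) s₀ := by
  set C := max |a| |b|
  have h_abs_le : ∀ t ∈ Ι a b, |t| ≤ C := by
    intro t ht
    rcases mem_uIcc.mp (uIoc_subset_uIcc ht) with ⟨h₁, h₂⟩ | ⟨h₁, h₂⟩
    · exact abs_le_max_abs_abs h₁ h₂
    · exact (abs_le_max_abs_abs h₁ h₂).trans_eq (max_comm _ _)
  have hg_meas : AEStronglyMeasurable g (volume.restrict (Ι a b)) :=
    (intervalIntegrable_iff.mp hg).aestronglyMeasurable
  refine (intervalIntegral.hasDerivAt_integral_of_dominated_loc_of_deriv_le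
    (F := fun s t => exp (s * t) * g t) (F' := fun s t => t * exp (s * t) * g t)
    (bound := fun t => C * exp ((|s₀| + 1) * C) * |g t|)
    (Metric.ball_mem_nhds s₀ one_pos) ?_ ?_ ?_ ?_ ?_ ?_).2
  · exact Eventually.of_forall fun s =>
      (continuous_exp.comp (continuous_const.mul continuous_id)).aestronglyMeasurable.mul hg_meas
  · exact hg.continuousOn_mul (by fun_prop)
  · exact (continuous_id.mul
      (continuous_exp.comp (continuous_const.mul continuous_id))).aestronglyMeasurable.mul hg_meas
  · refine Eventually.of_forall fun t ht s hs_ball => ?_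
    have hs : |s| ≤ |s₀| + 1 := by
      have := abs_sub_abs_le_abs_sub s s₀
      rw [Metric.mem_ball, Real.dist_eq] at hs_ball
      linarith
    have hst : s * t ≤ (|s₀| + 1) * C :=
      (le_abs_self _).trans ((abs_mul s t).trans_le
        (mul_le_mul hs (h_abs_le t ht) (abs_nonneg t) (by positivity)))
    simp only [norm_mul, Real.norm_eq_abs, abs_exp]
    gcongr
    exact h_abs_le t ht
  · exact hg.norm.const_mul _
  · exact Eventually.of_forall fun t _ s _ => by
      simpa [mul_comm, mul_assoc] using ((hasDerivAt_mul_const t).exp).mul_const (g t)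

theorem Efun_eq_integral_exp_mul {b : ℝ} (hb : 0 < b) (w : ℝ) :
    Efun b w = ∫ t in (0 : ℝ)..w, exp (log b * t) * (Gamma (t + 1))⁻¹ := by
  simp only [Efun, div_eq_mul_inv, rpow_def_of_pos hb]

theorem differentiableAt_Efun {a : ℝ} (ha : 0 < a) (w : ℝ) :
    DifferentiableAt ℝ (fun b => Efun b w) a := by
  have hg : IntervalIntegrable (fun t : ℝ => (Gamma (t + 1))⁻¹) volume 0 w :=
    (continuous_inv_Gamma.comp (continuous_add_const 1)).intervalIntegrable 0 w
  refine (((hasDerivAt_intervalIntegral_exp_mul hg (log a)).differentiableAt).comp a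
    (differentiableAt_log ha.ne')).congr_of_eventuallyEq ?_
  filter_upwards [Ioi_mem_nhds ha] with b hb
  exact Efun_eq_integral_exp_mul hb w

section RpowMulCompDiv

variable {f : ℝ → ℝ} {p k x y : ℝ}

theorem hasDerivAt_rpow_mul_comp_div_left (hx : x ≠ 0) (hf : DifferentiableAt ℝ f (y * k / x)) :
    HasDerivAt (fun u => u ^ p * f (y * k / u))
      (p * x ^ (p - 1) * f (y * k / x) - x ^ p * deriv f (y * k / x) * (y * k / x ^ 2)) x := by
  have h_inner : HasDerivAt (fun u => y * k / u) (-(y * k) / x ^ 2) x := by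
    simpa [div_eq_mul_inv, neg_div] using (hasDerivAt_inv hx).const_mul (y * k)
  refine ((hasDerivAt_rpow_const (Or.inl hx)).mul (hf.hasDerivAt.comp x h_inner)).congr_deriv ?_
  rw [Function.comp_apply]
  ring

theorem hasDerivAt_rpow_mul_comp_div_right (hf : DifferentiableAt ℝ f (y * k / x)) :
    HasDerivAt (fun v => x ^ p * f (v * k / x)) (x ^ p * deriv f (y * k / x) * (k / x)) y := by
  have h_inner : HasDerivAt (fun v => v * k / x) (k / x) y := by
    simpa using ((hasDerivAt_id y).mul_const k).div_const x
  simpa [mul_assoc] using (hf.hasDerivAt.comp y h_inner).const_mul (x ^ p)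

end RpowMulCompDiv

/-- For `x > 0`, `y > 0`, `z > 1`, `ρ` is partially differentiable in `x` and in `y`,
and satisfies the Euler relation `x ∂ρ/∂x + y ∂ρ/∂y = z ρ`. -/
theorem rho_euler_relation (x y z : ℝ) (hx : 0 < x) (hy : 0 < y) (hz : 1 < z) :
    DifferentiableAt ℝ (fun u : ℝ => rho u y z) x ∧
    DifferentiableAt ℝ (fun v : ℝ => rho x v z) y ∧
    x * deriv (fun u : ℝ => rho u y z) x + y * deriv (fun v : ℝ => rho x v z) y =
      z * rho x y z := by
  set k := (z - 1) ^ 2 / 2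
  have h_rho : ∀ u v, rho u v z = u ^ z * Efun (v * k / u) (z - 1) := fun u v => by
    rw [rho]; congr 2; ring
  have hE := differentiableAt_Efun (by positivity : 0 < y * k / x) (z - 1)
  have h_dx := hasDerivAt_rpow_mul_comp_div_left (p := z) hx.ne' hE
  have h_dy := hasDerivAt_rpow_mul_comp_div_right (p := z) hE
  simp only [h_rho]
  refine ⟨h_dx.differentiableAt, h_dy.differentiableAt, ?_⟩
  rw [h_dx.deriv, h_dy.deriv, rpow_sub_one hx.ne']
  field_simp
  ring
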